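/- For every x on the unit sphere S^{n-1} in R^n, x_n^2 = (Γ((2n+1)/4) / (2 π^{(n-1)/2} Γ(3/4))) · ∫_{S^{n-1}} |⟨x,ξ⟩|^{1/2} · ( (2n+1) ξ_n^2 − 2 ) dξ. -/

import Mathlib

/-!
Polar coordinates turn the integral of a function homogeneous of degree `d` against the Gaussian
`exp (-‖y‖²)` into `Γ((n + d) / 2) / 2` times its integral over the sphere. The Gaussian integrals
of `|⟪x, y⟫| ^ p` and `|⟪x, y⟫| ^ p * ⟪v, y⟫ ^ 2` factor into one-dimensional Gaussian moments in
an orthonormal basis starting with `x` (and `v - ⟪x, v⟫ • x`, normalized). Comparing the two gives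
`∫ |⟪x, ξ⟫| ^ p ⟪v, ξ⟫ ^ 2 dξ = (‖v‖ ^ 2 + p ⟪x, v⟫ ^ 2) / (n + p) * ∫ |⟪x, ξ⟫| ^ p dξ`, and for
`p = 1 / 2`, `v = e_n` the combination in the theorem isolates `x_n ^ 2`.
-/

open MeasureTheory Real Set Metric
open scoped RealInnerProductSpace

lemma integral_eq_zero_of_odd {f : ℝ → ℝ} (hf : ∀ t, f (-t) = -f t) : ∫ t, f t = 0 := by
  have h := integral_neg_eq_self f volume
  simp only [hf, integral_neg] at h
  linarith

lemma integrable_comp_abs_of_integrableOn_Ioi {f : ℝ → ℝ} (hf : IntegrableOn f (Ioi 0)) :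
    Integrable fun t ↦ f |t| := by
  have hIoi : IntegrableOn (fun t ↦ f |t|) (Ioi 0) :=
    hf.congr_fun (fun t ht ↦ by rw [abs_of_pos ht]) measurableSet_Ioi
  have hIic : IntegrableOn (fun t ↦ f |t|) (Iic 0) := by
    rw [← (Measure.measurePreserving_neg (volume : Measure ℝ)).integrableOn_comp_preimage
      (Homeomorph.neg ℝ).measurableEmbedding]
    simpa only [Function.comp_def, abs_neg, neg_preimage, neg_Iic, neg_zero]
      using (integrableOn_Ici_iff_integrableOn_Ioi).mpr hIoi
  simpa only [← integrableOn_univ, ← Iic_union_Ioi (a := (0 : ℝ))] using hIic.union hIoi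

section GaussianMoments

variable {p : ℝ}

lemma integrable_exp_neg_sq_mul_abs_rpow (hp : -1 < p) :
    Integrable fun t : ℝ ↦ rexp (-t ^ 2) * |t| ^ p := by
  have h : IntegrableOn (fun u : ℝ ↦ rexp (-u ^ 2) * u ^ p) (Ioi 0) := by
    simpa [mul_comm] using integrableOn_rpow_mul_exp_neg_mul_sq one_pos hp
  simpa only [sq_abs] using integrable_comp_abs_of_integrableOn_Ioi h

lemma integral_exp_neg_sq_mul_abs_rpow (hp : -1 < p) :
    ∫ t : ℝ, rexp (-t ^ 2) * |t| ^ p = Gamma ((p + 1) / 2) := by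
  have h := integral_comp_abs (f := fun u : ℝ ↦ rexp (-u ^ 2) * u ^ p)
  simp only [sq_abs] at h
  rw [h, setIntegral_congr_fun measurableSet_Ioi fun u _ ↦ by rw [mul_comm, ← rpow_two],
    integral_rpow_mul_exp_neg_rpow two_pos hp]
  ring

lemma abs_rpow_mul_sq (hp : -1 < p) (t : ℝ) : |t| ^ p * t ^ 2 = |t| ^ (p + 2) := by
  rw [rpow_add' (abs_nonneg t) (by linarith), ← sq_abs, rpow_two]

lemma norm_abs_rpow_mul_self (hp : -1 < p) (t : ℝ) : ‖|t| ^ p * t‖ = |t| ^ (p + 1) := by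
  rw [norm_mul, norm_of_nonneg (rpow_nonneg (abs_nonneg t) p), norm_eq_abs,
    rpow_add' (abs_nonneg t) (by linarith), rpow_one]

lemma integrable_exp_neg_sq_mul_abs_rpow_mul_sq (hp : -1 < p) :
    Integrable fun t : ℝ ↦ rexp (-t ^ 2) * (|t| ^ p * t ^ 2) := by
  simpa only [abs_rpow_mul_sq hp] using
    integrable_exp_neg_sq_mul_abs_rpow (by linarith : -1 < p + 2)

lemma integral_exp_neg_sq_mul_abs_rpow_mul_sq (hp : -1 < p) :
    ∫ t : ℝ, rexp (-t ^ 2) * (|t| ^ p * t ^ 2) = Gamma ((p + 1) / 2 + 1) := by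
  simp only [abs_rpow_mul_sq hp]
  rw [integral_exp_neg_sq_mul_abs_rpow (by linarith)]
  ring_nf

lemma integrable_exp_neg_sq_mul_abs_rpow_mul_self (hp : -1 < p) :
    Integrable fun t : ℝ ↦ rexp (-t ^ 2) * (|t| ^ p * t) := by
  refine (integrable_exp_neg_sq_mul_abs_rpow (by linarith : -1 < p + 1)).mono'
    (by fun_prop) (ae_of_all _ fun t ↦ ?_)
  rw [norm_mul, norm_of_nonneg (exp_pos _).le, norm_abs_rpow_mul_self hp]

lemma integral_exp_neg_sq_mul_abs_rpow_mul_self :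
    ∫ t : ℝ, rexp (-t ^ 2) * (|t| ^ p * t) = 0 :=
  integral_eq_zero_of_odd fun t ↦ by rw [neg_sq, abs_neg]; ring

end GaussianMoments

lemma integral_exp_neg_sq : ∫ t : ℝ, rexp (-t ^ 2) = √π := by
  simpa using integral_gaussian 1

lemma integral_exp_neg_sq_mul_sq : ∫ t : ℝ, rexp (-t ^ 2) * t ^ 2 = √π / 2 := by
  have h := integral_exp_neg_sq_mul_abs_rpow_mul_sq (p := 0) (by norm_num)
  simp only [rpow_zero, one_mul] at h
  rw [h, show ((0:ℝ) + 1) / 2 + 1 = 1 / 2 + 1 by norm_num, Gamma_add_one (by norm_num),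
    Gamma_one_half_eq]
  ring

lemma integral_exp_neg_sq_mul_self : ∫ t : ℝ, rexp (-t ^ 2) * t = 0 :=
  integral_eq_zero_of_odd fun t ↦ by rw [neg_sq]; ring

lemma integrable_exp_neg_sq_mul_self : Integrable fun t : ℝ ↦ rexp (-t ^ 2) * t := by
  simpa using integrable_exp_neg_sq_mul_abs_rpow_mul_self (p := 0) (by norm_num)

lemma integrable_exp_neg_sq_mul_sq : Integrable fun t : ℝ ↦ rexp (-t ^ 2) * t ^ 2 := by
  simpa using integrable_exp_neg_sq_mul_abs_rpow_mul_sq (p := 0) (by norm_num)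

section GaussianIntegrals

variable {ι : Type*} [Fintype ι]

lemma exp_neg_norm_sq_eq_prod (z : EuclideanSpace ℝ ι) :
    rexp (-‖z‖ ^ 2) = ∏ i, rexp (-z i ^ 2) := by
  rw [EuclideanSpace.real_norm_sq_eq, ← Finset.sum_neg_distrib, exp_sum]

lemma EuclideanSpace.integral_gaussian_mul_prod (f : ι → ℝ → ℝ) :
    ∫ z : EuclideanSpace ℝ ι, rexp (-‖z‖ ^ 2) * ∏ i, f i (z i) =
      ∏ i, ∫ t, rexp (-t ^ 2) * f i t := by
  simp only [exp_neg_norm_sq_eq_prod, ← Finset.prod_mul_distrib]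
  rw [← (EuclideanSpace.volume_preserving_symm_measurableEquiv_toLp ι).symm.integral_comp'
    fun z : EuclideanSpace ℝ ι ↦ ∏ i, rexp (-z i ^ 2) * f i (z i)]
  exact integral_fintype_prod_eq_prod fun i t ↦ rexp (-t ^ 2) * f i t

lemma EuclideanSpace.integrable_gaussian_mul_prod {f : ι → ℝ → ℝ}
    (hf : ∀ i, Integrable fun t ↦ rexp (-t ^ 2) * f i t) :
    Integrable fun z : EuclideanSpace ℝ ι ↦ rexp (-‖z‖ ^ 2) * ∏ i, f i (z i) := by
  simp only [exp_neg_norm_sq_eq_prod, ← Finset.prod_mul_distrib]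
  exact ((EuclideanSpace.volume_preserving_symm_measurableEquiv_toLp ι).integrable_comp_emb
    (MeasurableEquiv.measurableEmbedding _)).mpr (Integrable.fintype_prod hf)

variable {E : Type*} [NormedAddCommGroup E] [InnerProductSpace ℝ E] {p : ℝ} {x u w : E}

lemma orthonormal_normalize_of_inner_eq_zero (hx : ‖x‖ = 1) (hxw : ⟪x, w⟫ = 0) (hw : w ≠ 0) :
    Orthonormal ℝ ![x, ‖w‖⁻¹ • w] := by
  simp [hx, hxw, inner_smul_right, norm_smul, hw]

lemma inner_eq_norm_mul_inner_normalize (w y : E) : ⟪w, y⟫ = ‖w‖ * ⟪‖w‖⁻¹ • w, y⟫ := by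
  rcases eq_or_ne w 0 with rfl | hw
  · simp
  · rw [inner_smul_left, RCLike.conj_to_real, ← mul_assoc, mul_inv_cancel₀ (norm_ne_zero_iff.2 hw),
      one_mul]

lemma abs_inner_smul_rpow {r : ℝ} (hr : 0 < r) (x ξ : E) :
    |⟪x, r • ξ⟫| ^ p = r ^ p * |⟪x, ξ⟫| ^ p := by
  rw [inner_smul_right, abs_mul, abs_of_pos hr, mul_rpow hr.le (abs_nonneg _)]

variable [FiniteDimensional ℝ E]

lemma Orthonormal.exists_orthonormalBasis_sum_extension {v : ι → E} (hv : Orthonormal ℝ v) :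
    ∃ b : OrthonormalBasis (ι ⊕ Fin (Module.finrank ℝ E - Fintype.card ι)) ℝ E,
      ∀ i, b (.inl i) = v i := by
  have hcard := hv.linearIndependent.fintype_card_le_finrank
  let ι' := ι ⊕ Fin (Module.finrank ℝ E - Fintype.card ι)
  have hrestrict : (range (Sum.inl : ι → ι')).domRestrict (Sum.elim v 0) =
      v ∘ (Equiv.ofInjective _ Sum.inl_injective).symm := by
    ext ⟨_, i, rfl⟩
    exact (congrArg v (Equiv.ofInjective_symm_apply Sum.inl_injective i)).symm
  obtain ⟨b, hb⟩ := Orthonormal.exists_orthonormalBasis_extension_of_card_eq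
    (𝕜 := ℝ) (ι := ι') (v := Sum.elim v 0) (s := range Sum.inl)
    (by rw [Fintype.card_sum, Fintype.card_fin]; omega)
    (by rw [hrestrict]; exact hv.comp _ (Equiv.injective _))
  exact ⟨b, fun i ↦ hb _ (mem_range_self i)⟩

variable [MeasurableSpace E] [BorelSpace E]

lemma OrthonormalBasis.integral_gaussian_mul_prod (b : OrthonormalBasis ι ℝ E)
    (f : ι → ℝ → ℝ) :
    ∫ y : E, rexp (-‖y‖ ^ 2) * ∏ i, f i ⟪b i, y⟫ = ∏ i, ∫ t, rexp (-t ^ 2) * f i t := by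
  rw [← EuclideanSpace.integral_gaussian_mul_prod, ← b.measurePreserving_repr.integral_comp
    b.repr.toHomeomorph.measurableEmbedding]
  simp only [b.repr.norm_map, b.repr_apply_apply]

lemma OrthonormalBasis.integrable_gaussian_mul_prod (b : OrthonormalBasis ι ℝ E)
    {f : ι → ℝ → ℝ} (hf : ∀ i, Integrable fun t ↦ rexp (-t ^ 2) * f i t) :
    Integrable fun y : E ↦ rexp (-‖y‖ ^ 2) * ∏ i, f i ⟪b i, y⟫ := by
  have h := (b.measurePreserving_repr.integrable_comp_emb
    b.repr.toHomeomorph.measurableEmbedding).mpr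
    (EuclideanSpace.integrable_gaussian_mul_prod hf)
  simpa only [Function.comp_def, b.repr.norm_map, b.repr_apply_apply] using h

lemma Orthonormal.integral_gaussian_mul_prod {v : ι → E} (hv : Orthonormal ℝ v)
    (f : ι → ℝ → ℝ) :
    ∫ y : E, rexp (-‖y‖ ^ 2) * ∏ i, f i ⟪v i, y⟫ =
      √π ^ (Module.finrank ℝ E - Fintype.card ι) * ∏ i, ∫ t, rexp (-t ^ 2) * f i t := by
  obtain ⟨b, hb⟩ := hv.exists_orthonormalBasis_sum_extension
  have h := b.integral_gaussian_mul_prod (Sum.elim f fun _ _ ↦ 1)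
  simp only [Fintype.prod_sum_type, Sum.elim_inl, Sum.elim_inr, hb, Finset.prod_const_one,
    mul_one, integral_exp_neg_sq, Finset.prod_const, Finset.card_univ, Fintype.card_fin] at h
  rw [h, mul_comm]

lemma Orthonormal.integrable_gaussian_mul_prod {v : ι → E} (hv : Orthonormal ℝ v)
    {f : ι → ℝ → ℝ} (hf : ∀ i, Integrable fun t ↦ rexp (-t ^ 2) * f i t) :
    Integrable fun y : E ↦ rexp (-‖y‖ ^ 2) * ∏ i, f i ⟪v i, y⟫ := by
  obtain ⟨b, hb⟩ := hv.exists_orthonormalBasis_sum_extension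
  have h := b.integrable_gaussian_mul_prod (f := Sum.elim f fun _ _ ↦ 1) (by
    rintro (i | j)
    · exact hf i
    · simpa using (integrable_exp_neg_mul_sq one_pos))
  simpa only [Fintype.prod_sum_type, Sum.elim_inl, Sum.elim_inr, hb, Finset.prod_const_one,
    mul_one] using h

lemma integral_gaussian_mul_comp_inner (hx : ‖x‖ = 1) (g : ℝ → ℝ) :
    ∫ y : E, rexp (-‖y‖ ^ 2) * g ⟪x, y⟫ =
      √π ^ (Module.finrank ℝ E - 1) * ∫ t, rexp (-t ^ 2) * g t := by
  have hv : Orthonormal ℝ ![x] := by simp [hx]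
  simpa using hv.integral_gaussian_mul_prod ![g]

lemma integrable_gaussian_mul_comp_inner (hx : ‖x‖ = 1) {g : ℝ → ℝ}
    (hg : Integrable fun t ↦ rexp (-t ^ 2) * g t) :
    Integrable fun y : E ↦ rexp (-‖y‖ ^ 2) * g ⟪x, y⟫ := by
  have hv : Orthonormal ℝ ![x] := by simp [hx]
  simpa using hv.integrable_gaussian_mul_prod (f := ![g]) (by simpa using hg)

lemma Orthonormal.integral_gaussian_mul_comp_inner_mul_comp_inner (hxu : Orthonormal ℝ ![x, u])
    (g h : ℝ → ℝ) :
    ∫ y : E, rexp (-‖y‖ ^ 2) * (g ⟪x, y⟫ * h ⟪u, y⟫) =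
      √π ^ (Module.finrank ℝ E - 2) *
        ((∫ t, rexp (-t ^ 2) * g t) * ∫ t, rexp (-t ^ 2) * h t) := by
  simpa using hxu.integral_gaussian_mul_prod ![g, h]

lemma Orthonormal.integrable_gaussian_mul_comp_inner_mul_comp_inner
    (hxu : Orthonormal ℝ ![x, u]) {g h : ℝ → ℝ}
    (hg : Integrable fun t ↦ rexp (-t ^ 2) * g t) (hh : Integrable fun t ↦ rexp (-t ^ 2) * h t) :
    Integrable fun y : E ↦ rexp (-‖y‖ ^ 2) * (g ⟪x, y⟫ * h ⟪u, y⟫) := by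
  simpa using hxu.integrable_gaussian_mul_prod (f := ![g, h])
    (by simp [Fin.forall_fin_two, hg, hh])

lemma integrable_gaussian_mul_comp_inner_mul_inner_pow (hx : ‖x‖ = 1) (hxw : ⟪x, w⟫ = 0)
    {g : ℝ → ℝ} (hg : Integrable fun t ↦ rexp (-t ^ 2) * g t) {m : ℕ}
    (hm : Integrable fun t : ℝ ↦ rexp (-t ^ 2) * t ^ m) :
    Integrable fun y : E ↦ rexp (-‖y‖ ^ 2) * (g ⟪x, y⟫ * ⟪w, y⟫ ^ m) := by
  rcases eq_or_ne w 0 with rfl | hw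
  · simpa only [inner_zero_left, ← mul_assoc] using
      (integrable_gaussian_mul_comp_inner hx hg).mul_const _
  have hxu := orthonormal_normalize_of_inner_eq_zero hx hxw hw
  simpa only [inner_eq_norm_mul_inner_normalize w, mul_pow, mul_left_comm _ (‖w‖ ^ m)] using
    (hxu.integrable_gaussian_mul_comp_inner_mul_comp_inner hg hm).const_mul (‖w‖ ^ m)

lemma integral_gaussian_mul_comp_inner_mul_inner (hx : ‖x‖ = 1) (hxw : ⟪x, w⟫ = 0)
    (g : ℝ → ℝ) :
    ∫ y : E, rexp (-‖y‖ ^ 2) * (g ⟪x, y⟫ * ⟪w, y⟫) = 0 := by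
  rcases eq_or_ne w 0 with rfl | hw
  · simp
  have hxu := orthonormal_normalize_of_inner_eq_zero hx hxw hw
  have h := hxu.integral_gaussian_mul_comp_inner_mul_comp_inner g fun t ↦ t
  rw [integral_exp_neg_sq_mul_self, mul_zero, mul_zero] at h
  simp only [inner_eq_norm_mul_inner_normalize w, mul_left_comm _ ‖w‖, integral_const_mul, h,
    mul_zero]

lemma integral_gaussian_mul_comp_inner_mul_inner_sq (hx : ‖x‖ = 1) (hxw : ⟪x, w⟫ = 0)
    (g : ℝ → ℝ) :
    ∫ y : E, rexp (-‖y‖ ^ 2) * (g ⟪x, y⟫ * ⟪w, y⟫ ^ 2) =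
      ‖w‖ ^ 2 * √π ^ (Module.finrank ℝ E - 1) / 2 * ∫ t, rexp (-t ^ 2) * g t := by
  rcases eq_or_ne w 0 with rfl | hw
  · simp
  have hxu := orthonormal_normalize_of_inner_eq_zero hx hxw hw
  have hdim : 2 ≤ Module.finrank ℝ E := by
    simpa using hxu.linearIndependent.fintype_card_le_finrank
  have hpow : √π ^ (Module.finrank ℝ E - 2) * √π = √π ^ (Module.finrank ℝ E - 1) := by
    rw [← pow_succ]; congr 1; omega
  have h := hxu.integral_gaussian_mul_comp_inner_mul_comp_inner g fun t ↦ t ^ 2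
  rw [integral_exp_neg_sq_mul_sq] at h
  simp only [inner_eq_norm_mul_inner_normalize w, mul_pow, mul_left_comm _ (‖w‖ ^ 2),
    integral_const_mul, h, ← hpow]
  ring

lemma integral_gaussian_mul_abs_inner_rpow (hp : -1 < p) (hx : ‖x‖ = 1) :
    ∫ y : E, rexp (-‖y‖ ^ 2) * |⟪x, y⟫| ^ p =
      √π ^ (Module.finrank ℝ E - 1) * Gamma ((p + 1) / 2) := by
  rw [integral_gaussian_mul_comp_inner hx fun t ↦ |t| ^ p, integral_exp_neg_sq_mul_abs_rpow hp]

lemma integral_gaussian_mul_abs_inner_rpow_mul_inner_sq (hp : -1 < p) (hx : ‖x‖ = 1) (v : E) :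
    ∫ y : E, rexp (-‖y‖ ^ 2) * (|⟪x, y⟫| ^ p * ⟪v, y⟫ ^ 2) =
      √π ^ (Module.finrank ℝ E - 1) * Gamma ((p + 1) / 2) / 2 * (‖v‖ ^ 2 + p * ⟪x, v⟫ ^ 2) := by
  set a := ⟪x, v⟫
  set w := v - a • x
  have hxw : ⟪x, w⟫ = 0 := by
    simp [w, inner_sub_right, inner_smul_right, hx, a]
  have hv : ‖v‖ ^ 2 = a ^ 2 + ‖w‖ ^ 2 := by
    have h := norm_add_sq_eq_norm_sq_add_norm_sq_real (x := a • x) (y := w)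
      (by rw [inner_smul_left]; simp [hxw])
    rw [show a • x + w = v by simp [w], norm_smul, hx, mul_one, norm_eq_abs] at h
    rw [sq, sq, sq, h, abs_mul_abs_self]
  have hexpand : ∀ y : E, rexp (-‖y‖ ^ 2) * (|⟪x, y⟫| ^ p * ⟪v, y⟫ ^ 2) =
      a ^ 2 * (rexp (-‖y‖ ^ 2) * (|⟪x, y⟫| ^ p * ⟪x, y⟫ ^ 2)) +
        2 * a * (rexp (-‖y‖ ^ 2) * (|⟪x, y⟫| ^ p * ⟪x, y⟫ * ⟪w, y⟫)) +
        rexp (-‖y‖ ^ 2) * (|⟪x, y⟫| ^ p * ⟪w, y⟫ ^ 2) := fun y ↦ by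
    simp only [w, inner_sub_left, inner_smul_left, RCLike.conj_to_real]
    ring
  have hint₁ := integrable_gaussian_mul_comp_inner (E := E) hx
    (integrable_exp_neg_sq_mul_abs_rpow_mul_sq hp)
  have hint₂ : Integrable fun y : E ↦ rexp (-‖y‖ ^ 2) * (|⟪x, y⟫| ^ p * ⟪x, y⟫ * ⟪w, y⟫) := by
    simpa only [pow_one] using integrable_gaussian_mul_comp_inner_mul_inner_pow hx hxw
      (integrable_exp_neg_sq_mul_abs_rpow_mul_self hp) (m := 1)
      (by simpa only [pow_one] using integrable_exp_neg_sq_mul_self)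
  have hint₃ := integrable_gaussian_mul_comp_inner_mul_inner_pow hx hxw
    (integrable_exp_neg_sq_mul_abs_rpow hp) integrable_exp_neg_sq_mul_sq
  simp only [hexpand]
  rw [integral_add ?_ hint₃,
    integral_add (hint₁.const_mul _) (hint₂.const_mul _), integral_const_mul, integral_const_mul,
    integral_gaussian_mul_comp_inner hx fun t ↦ |t| ^ p * t ^ 2,
    integral_gaussian_mul_comp_inner_mul_inner hx hxw fun t ↦ |t| ^ p * t,
    integral_gaussian_mul_comp_inner_mul_inner_sq hx hxw fun t ↦ |t| ^ p,
    integral_exp_neg_sq_mul_abs_rpow_mul_sq hp, integral_exp_neg_sq_mul_abs_rpow hp,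
    Gamma_add_one (by linarith), hv]
  · ring
  · exact (hint₁.const_mul _).add (hint₂.const_mul _)

end GaussianIntegrals

section Polar

lemma MeasureTheory.Measure.integral_volumeIoiPow (n : ℕ) (f : ℝ → ℝ) :
    ∫ r : Ioi (0 : ℝ), f r ∂Measure.volumeIoiPow n = ∫ r in Ioi (0 : ℝ), r ^ n * f r := by
  rw [Measure.volumeIoiPow, integral_withDensity_eq_integral_toReal_smul
      (measurable_subtype_coe.pow_const n).ennreal_ofReal
      (ae_of_all _ fun _ ↦ ENNReal.ofReal_lt_top),
    integral_subtype_comap measurableSet_Ioi fun r ↦ (ENNReal.ofReal (r ^ n)).toReal • f r]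
  refine setIntegral_congr_fun measurableSet_Ioi fun r hr ↦ ?_
  rw [ENNReal.toReal_ofReal (pow_nonneg (le_of_lt hr) n), smul_eq_mul]

variable {E : Type*} [NormedAddCommGroup E] [NormedSpace ℝ E] [FiniteDimensional ℝ E]
  [Nontrivial E] [MeasurableSpace E] [BorelSpace E] (μ : Measure E) [μ.IsAddHaarMeasure]

lemma integral_eq_integral_sphere_prod_Ioi (f : E → ℝ) :
    ∫ y, f y ∂μ = ∫ q : sphere (0 : E) 1 × Ioi (0 : ℝ), f ((q.2 : ℝ) • (q.1 : E))
      ∂(μ.toSphere.prod (Measure.volumeIoiPow (Module.finrank ℝ E - 1))) := by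
  have h : ∫ y, f y ∂μ = ∫ y : ({0}ᶜ : Set E), f y ∂(μ.comap Subtype.val) := by
    rw [integral_subtype_comap (measurableSet_singleton _).compl, restrict_compl_singleton]
  rw [h, ← (Measure.measurePreserving_homeomorphUnitSphereProd μ).integral_comp
      (Homeomorph.measurableEmbedding _)]
  refine integral_congr_ae (ae_of_all _ fun y ↦ ?_)
  simp only [homeomorphUnitSphereProd_apply_snd_coe, homeomorphUnitSphereProd_apply_fst_coe]
  rw [smul_inv_smul₀ (norm_ne_zero_iff.2 y.2)]

lemma integral_comp_norm_mul_of_homogeneous (g : ℝ → ℝ) {φ : E → ℝ} {d : ℝ}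
    (hφ : ∀ r : ℝ, 0 < r → ∀ ξ ∈ sphere (0 : E) 1, φ (r • ξ) = r ^ d * φ ξ) :
    ∫ y, g ‖y‖ * φ y ∂μ =
      (∫ r in Ioi (0 : ℝ), r ^ (Module.finrank ℝ E - 1) * (r ^ d * g r)) *
        ∫ ξ : sphere (0 : E) 1, φ ξ ∂μ.toSphere := by
  have h : ∀ q : sphere (0 : E) 1 × Ioi (0 : ℝ),
      g ‖(q.2 : ℝ) • (q.1 : E)‖ * φ ((q.2 : ℝ) • (q.1 : E)) = φ q.1 * ((q.2 : ℝ) ^ d * g q.2) := by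
    rintro ⟨ξ, r, hr⟩
    rw [hφ r hr ξ ξ.2, norm_smul, norm_of_nonneg (le_of_lt hr), norm_eq_of_mem_sphere, mul_one]
    ring
  rw [integral_eq_integral_sphere_prod_Ioi, funext h,
    integral_prod_mul (fun ξ : sphere (0 : E) 1 ↦ φ ξ) fun r : Ioi (0 : ℝ) ↦ (r : ℝ) ^ d * g r,
    Measure.integral_volumeIoiPow _ fun r ↦ r ^ d * g r, mul_comm]

end Polar

lemma integral_Ioi_pow_mul_rpow_mul_exp_neg_sq (n : ℕ) {d : ℝ} (hd : -1 < n + d) :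
    ∫ r in Ioi (0 : ℝ), r ^ n * (r ^ d * rexp (-r ^ 2)) = Gamma ((n + d + 1) / 2) / 2 := by
  rw [setIntegral_congr_fun measurableSet_Ioi fun r (hr : 0 < r) ↦ by
      rw [← mul_assoc, ← rpow_natCast, ← rpow_add hr, ← rpow_two],
    integral_rpow_mul_exp_neg_rpow two_pos hd]
  ring

section SphereMoments

variable {E : Type*} [NormedAddCommGroup E] [InnerProductSpace ℝ E] [FiniteDimensional ℝ E]
  [MeasurableSpace E] [BorelSpace E] {p : ℝ} {x : E}

lemma integral_gaussian_mul_of_homogeneous [Nontrivial E] {φ : E → ℝ} {d : ℝ}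
    (hd : 0 < Module.finrank ℝ E + d)
    (hφ : ∀ r : ℝ, 0 < r → ∀ ξ ∈ sphere (0 : E) 1, φ (r • ξ) = r ^ d * φ ξ) :
    ∫ y : E, rexp (-‖y‖ ^ 2) * φ y =
      Gamma ((Module.finrank ℝ E + d) / 2) / 2 * ∫ ξ : sphere (0 : E) 1, φ ξ ∂volume.toSphere := by
  have hN : ((Module.finrank ℝ E - 1 : ℕ) : ℝ) = Module.finrank ℝ E - 1 :=
    Nat.cast_pred Module.finrank_pos
  rw [integral_comp_norm_mul_of_homogeneous volume (fun r ↦ rexp (-r ^ 2)) hφ,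
    integral_Ioi_pow_mul_rpow_mul_exp_neg_sq _ (by rw [hN]; linarith), hN]
  ring_nf

lemma integral_sphere_abs_inner_rpow (hp : -1 < p) (hx : ‖x‖ = 1) :
    ∫ ξ : sphere (0 : E) 1, |⟪x, ξ⟫| ^ p ∂volume.toSphere =
      2 * √π ^ (Module.finrank ℝ E - 1) * Gamma ((p + 1) / 2) /
        Gamma ((Module.finrank ℝ E + p) / 2) := by
  have : Nontrivial E := nontrivial_of_ne x 0 (by rintro rfl; simp at hx)
  have hN : (1 : ℝ) ≤ Module.finrank ℝ E := by exact_mod_cast Module.finrank_pos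
  have h := integral_gaussian_mul_of_homogeneous (φ := fun y ↦ |⟪x, y⟫| ^ p) (by linarith)
    fun r hr ξ _ ↦ abs_inner_smul_rpow hr x ξ
  rw [integral_gaussian_mul_abs_inner_rpow hp hx] at h
  have hΓ : 0 < Gamma ((Module.finrank ℝ E + p) / 2) := Gamma_pos_of_pos (by linarith)
  field_simp
  linarith

lemma integral_sphere_abs_inner_rpow_mul_inner_sq (hp : -1 < p) (hx : ‖x‖ = 1) (v : E) :
    ∫ ξ : sphere (0 : E) 1, |⟪x, ξ⟫| ^ p * ⟪v, ξ⟫ ^ 2 ∂volume.toSphere =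
      (‖v‖ ^ 2 + p * ⟪x, v⟫ ^ 2) / (Module.finrank ℝ E + p) *
        ∫ ξ : sphere (0 : E) 1, |⟪x, ξ⟫| ^ p ∂volume.toSphere := by
  have : Nontrivial E := nontrivial_of_ne x 0 (by rintro rfl; simp at hx)
  have hN : (1 : ℝ) ≤ Module.finrank ℝ E := by exact_mod_cast Module.finrank_pos
  have h := integral_gaussian_mul_of_homogeneous (φ := fun y ↦ |⟪x, y⟫| ^ p * ⟪v, y⟫ ^ 2)
    (d := p + 2) (by linarith) fun r hr ξ _ ↦ by
      rw [abs_inner_smul_rpow hr, inner_smul_right, rpow_add hr, rpow_two]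
      ring
  rw [integral_gaussian_mul_abs_inner_rpow_mul_inner_sq hp hx,
    show (Module.finrank ℝ E + (p + 2)) / 2 = (Module.finrank ℝ E + p) / 2 + 1 by ring,
    Gamma_add_one (by linarith)] at h
  have hΓ : 0 < Gamma ((Module.finrank ℝ E + p) / 2) := Gamma_pos_of_pos (by linarith)
  have hNp : 0 < Module.finrank ℝ E + p := by linarith
  rw [integral_sphere_abs_inner_rpow hp hx]
  field_simp
  linear_combination -4 * h

lemma integral_sphere_abs_inner_rpow_mul_sub (hp : 0 ≤ p) (hx : ‖x‖ = 1) {v : E} (hv : ‖v‖ = 1) :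
    ∫ ξ : sphere (0 : E) 1, |⟪x, ξ⟫| ^ p * ((Module.finrank ℝ E + p) * ⟪v, ξ⟫ ^ 2 - 1)
        ∂volume.toSphere =
      p * ⟪x, v⟫ ^ 2 * ∫ ξ : sphere (0 : E) 1, |⟪x, ξ⟫| ^ p ∂volume.toSphere := by
  have : Nontrivial E := nontrivial_of_ne x 0 (by rintro rfl; simp at hx)
  have hNp : 0 < Module.finrank ℝ E + p := by
    have : (1 : ℝ) ≤ Module.finrank ℝ E := by exact_mod_cast Module.finrank_pos
    linarith
  have hint (f : sphere (0 : E) 1 → ℝ) (hf : Continuous f) : Integrable f volume.toSphere :=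
    hf.integrable_of_hasCompactSupport (HasCompactSupport.of_compactSpace _)
  simp only [mul_sub, mul_one, mul_left_comm _ (Module.finrank ℝ E + p : ℝ)]
  rw [integral_sub ((hint _ (by fun_prop (disch := simp [hp]))).const_mul _)
      (hint _ (by fun_prop (disch := simp [hp]))), integral_const_mul,
    integral_sphere_abs_inner_rpow_mul_inner_sq (by linarith) hx, hv]
  field_simp
  ring

end SphereMoments

theorem stmt2 (n : ℕ) (hn : 1 ≤ n)
    (x : EuclideanSpace ℝ (Fin n)) (hx : x ∈ Metric.sphere (0 : EuclideanSpace ℝ (Fin n)) 1) :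
    x ⟨n - 1, by omega⟩ ^ 2 =
      Real.Gamma ((2 * n + 1) / 4) / (2 * Real.pi ^ ((n - 1 : ℝ) / 2) * Real.Gamma (3 / 4)) *
        ∫ ξ : Metric.sphere (0 : EuclideanSpace ℝ (Fin n)) 1,
          |⟪x, (ξ : EuclideanSpace ℝ (Fin n))⟫| ^ ((1 : ℝ) / 2) *
            ((2 * n + 1) * (ξ : EuclideanSpace ℝ (Fin n)) ⟨n - 1, by omega⟩ ^ 2 - 2)
          ∂(volume.toSphere) := by
  set e := EuclideanSpace.single (⟨n - 1, by omega⟩ : Fin n) (1 : ℝ)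
  have hx1 : ‖x‖ = 1 := by simpa using hx
  have he : ‖e‖ = 1 := by simp [e]
  have hcoord (ξ : EuclideanSpace ℝ (Fin n)) : ξ ⟨n - 1, by omega⟩ = ⟪e, ξ⟫ := by
    simp [e, EuclideanSpace.inner_single_left]
  have hpi : π ^ ((n - 1 : ℝ) / 2) = √π ^ (n - 1) := by
    rw [sqrt_eq_rpow, ← rpow_natCast, ← rpow_mul pi_pos.le, Nat.cast_pred hn]
    ring_nf
  have hfactor (t : ℝ) : (2 * n + 1) * t - 2 = 2 * ((n + 1 / 2) * t - 1) := by ring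
  have key := integral_sphere_abs_inner_rpow_mul_sub (p := 1 / 2) (by norm_num) hx1 he
  rw [finrank_euclideanSpace_fin, real_inner_comm] at key
  simp only [hcoord, hfactor, mul_left_comm _ (2 : ℝ), integral_const_mul, key,
    integral_sphere_abs_inner_rpow (by norm_num : (-1 : ℝ) < 1 / 2) hx1, finrank_euclideanSpace_fin,
    hpi, show (2 * n + 1 : ℝ) / 4 = (n + 1 / 2) / 2 by ring]
  have hΓ : 0 < Gamma (((n : ℝ) + 1 / 2) / 2) := Gamma_pos_of_pos (by positivity)
  have hΓ' : 0 < Gamma (3 / 4) := Gamma_pos_of_pos (by norm_num)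
  field_simp
  norm_num
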